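/- Fix r ≥ 0, let 0 < η < 1, and define α^{(ℓ)} = C₀(1−η)^ℓ + B·∑_{s=1}^{ℓ} η(1−η)^{ℓ−s+1} for constants C₀, B ≥ 0. Then for 0 ≤ c < 1: ∑_{ℓ=1}^{r} α^{(ℓ)} (1 − η + ηc)^{r−ℓ} ≤ r·C₀·(1 − η + ηc)^{r} + B/(η(1 − c)). -/

import Mathlib

/-! With `q = 1 - η + η c`, which lies in `[1 - η, 1)`, the weights `η (1 - η)^(ℓ - s + 1)` sum to
at most `1`, so `α^(ℓ) ≤ C₀ (1 - η)^ℓ + B`. The first part contributes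
`C₀ (1 - η)^ℓ q^(r - ℓ) ≤ C₀ q^r` to each of the `r` summands, and the second at most
`B ∑_{i < r} q^i ≤ B / (1 - q) = B / (η (1 - c))`. -/

open Finset

theorem sum_Icc_one_sub_eq_sum_range {M : Type*} [AddCommMonoid M] (f : ℕ → M) (m : ℕ) :
    ∑ l ∈ Icc 1 m, f (m - l) = ∑ i ∈ range m, f i := by
  refine sum_nbij' (fun l => m - l) (fun i => m - i) ?_ ?_ ?_ ?_ ?_ <;>
    intro a ha <;> simp only [mem_Icc, mem_range] at * <;> omega

theorem geom_sum_le_inv_one_sub {x : ℝ} (hx0 : 0 ≤ x) (hx1 : x < 1) (n : ℕ) :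
    ∑ i ∈ range n, x ^ i ≤ (1 - x)⁻¹ := by
  have h := geom_sum_Ico_le_of_lt_one (m := 0) (n := n) hx0 hx1
  rwa [pow_zero, one_div, ← range_eq_Ico] at h

theorem sum_Icc_mul_pow_le_one {η : ℝ} (hη0 : 0 ≤ η) (hη1 : η ≤ 1) (l : ℕ) :
    ∑ s ∈ Icc 1 l, η * (1 - η) ^ (l - s + 1) ≤ 1 := by
  have h1η : 0 ≤ 1 - η := by linarith
  calc ∑ s ∈ Icc 1 l, η * (1 - η) ^ (l - s + 1)
      = ∑ i ∈ range l, η * (1 - η) ^ (i + 1) :=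
        sum_Icc_one_sub_eq_sum_range (fun i => η * (1 - η) ^ (i + 1)) l
    _ = (1 - η) * ((1 - (1 - η)) * ∑ i ∈ range l, (1 - η) ^ i) := by
        rw [mul_sum, mul_sum]
        exact sum_congr rfl fun i _ => by ring
    _ = (1 - η) * (1 - (1 - η) ^ l) := by rw [mul_neg_geom_sum]
    _ ≤ 1 := by nlinarith [mul_nonneg h1η (pow_nonneg h1η l)]

theorem pow_mul_pow_sub_le {R : Type*} [CommSemiring R] [PartialOrder R] [IsOrderedRing R]
    {p q : R} (hp : 0 ≤ p) (hpq : p ≤ q) {l r : ℕ} (hlr : l ≤ r) :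
    p ^ l * q ^ (r - l) ≤ q ^ r :=
  calc p ^ l * q ^ (r - l) ≤ q ^ l * q ^ (r - l) :=
        mul_le_mul_of_nonneg_right (pow_le_pow_left₀ hp hpq l) (pow_nonneg (hp.trans hpq) _)
    _ = q ^ r := by rw [← pow_add, Nat.add_sub_cancel' hlr]

theorem sum_Icc_mul_pow_sub_le {a : ℕ → ℝ} {p q C B : ℝ} (hp : 0 ≤ p) (hpq : p ≤ q) (hq : q < 1)
    (hC : 0 ≤ C) (hB : 0 ≤ B) (ha : ∀ l, a l ≤ C * p ^ l + B) (r : ℕ) :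
    ∑ l ∈ Icc 1 r, a l * q ^ (r - l) ≤ r * C * q ^ r + B / (1 - q) := by
  have hq0 : 0 ≤ q := hp.trans hpq
  have hterm : ∀ l ∈ Icc 1 r, a l * q ^ (r - l) ≤ C * q ^ r + B * q ^ (r - l) := by
    intro l hl
    calc a l * q ^ (r - l) ≤ (C * p ^ l + B) * q ^ (r - l) :=
          mul_le_mul_of_nonneg_right (ha l) (pow_nonneg hq0 _)
      _ = C * (p ^ l * q ^ (r - l)) + B * q ^ (r - l) := by ring
      _ ≤ C * q ^ r + B * q ^ (r - l) := by
          gcongr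
          exact pow_mul_pow_sub_le hp hpq (mem_Icc.1 hl).2
  calc ∑ l ∈ Icc 1 r, a l * q ^ (r - l)
      ≤ ∑ l ∈ Icc 1 r, (C * q ^ r + B * q ^ (r - l)) := sum_le_sum hterm
    _ = r * C * q ^ r + B * ∑ i ∈ range r, q ^ i := by
        rw [sum_add_distrib, sum_const, ← mul_sum, sum_Icc_one_sub_eq_sum_range (q ^ ·),
          Nat.card_Icc, nsmul_eq_mul]
        push_cast
        ring
    _ ≤ r * C * q ^ r + B / (1 - q) := by
        rw [div_eq_mul_inv]
        gcongr
        exact geom_sum_le_inv_one_sub hq0 hq r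

theorem alpha_weighted_sum_bound (η c C0 B : ℝ) (r : ℕ) (α : ℕ → ℝ)
    (hη0 : 0 < η) (hη1 : η < 1) (hc0 : 0 ≤ c) (hc1 : c < 1)
    (hC0 : 0 ≤ C0) (hB : 0 ≤ B)
    (hα : ∀ l : ℕ, α l = C0 * (1 - η)^l
        + B * ∑ s ∈ Finset.Icc 1 l, η * (1 - η)^(l - s + 1)) :
    ∑ l ∈ Finset.Icc 1 r, α l * (1 - η + η * c)^(r - l)
      ≤ r * C0 * (1 - η + η * c)^r + B / (η * (1 - c)) := by
  have hα_le : ∀ l, α l ≤ C0 * (1 - η) ^ l + B := fun l => by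
    rw [hα l]
    gcongr
    exact mul_le_of_le_one_right hB (sum_Icc_mul_pow_le_one hη0.le hη1.le l)
  have hq : η * (1 - c) = 1 - (1 - η + η * c) := by ring
  rw [hq]
  exact sum_Icc_mul_pow_sub_le (by linarith) (by nlinarith) (by nlinarith) hC0 hB hα_le r
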